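/- For every extensional digraph G, the structure 𝕍_ω(G) has a true power set operator: for any X ∈ M_ω(G) and any subset Y ⊆ {x ∈ M_ω(G) : x E_ω X}, there is Y' ∈ M_ω(G) such that Y = {x ∈ M_ω(G) : x E_ω Y'}. -/
import Mathlib

/-- An extensional digraph: a set `M` (of ZF-sets) together with a binary relation
`E` on `M` such that any two elements of `M` with the same `E`-predecessors are
equal. -/
structure ExtDigraph where
  /-- The carrier set. -/
  M : ZFSet
  /-- The edge relation. -/
  E : ZFSet → ZFSet → Prop
  dom_left : ∀ x y, E x y → x ∈ M
  dom_right : ∀ x y, E x y → y ∈ M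
  ext : ∀ x y, x ∈ M → y ∈ M → (∀ z, E z x ↔ E z y) → x = y

namespace ExtDigraph

/-- The von Neumann natural number `n` as a ZF-set, used as a tag. -/
def tag : ℕ → ZFSet
  | 0 => ∅
  | n + 1 => insert (tag n) (tag n)

/-- The deficiency of a digraph `(M, E)`: the collection of subsets of `M` which are
not the `E`-predecessor set of any element of `M`. -/
def defic (M : ZFSet) (E : ZFSet → ZFSet → Prop) : ZFSet :=
  (ZFSet.powerset M).sep fun X => ¬ ∃ y, y ∈ M ∧ ∀ z, z ∈ M → (z ∈ X ↔ E z y)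

/-- The digraphs `𝕍_n(G) = (M_n, E_n)`, defined recursively:
`M_0 = {0} × M` with `(0,x) E_0 (0,y)` iff `x E y`; and
`M_{n+1} = M_n ∪ ({n+1} × D(𝕍_n))` where `E_{n+1}` adds the pairs
`(z, (n+1, X))` for `z ∈ X ∈ D(𝕍_n)`. -/
def lvl (G : ExtDigraph) : ℕ → ZFSet × (ZFSet → ZFSet → Prop)
  | 0 =>
    (ZFSet.prod {tag 0} G.M,
      fun a b => ∃ x y, G.E x y ∧ a = ZFSet.pair (tag 0) x ∧ b = ZFSet.pair (tag 0) y)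
  | n + 1 =>
    let p := lvl G n
    (p.1 ∪ ZFSet.prod {tag (n + 1)} (defic p.1 p.2),
      fun a b => p.2 a b ∨
        ∃ X, X ∈ defic p.1 p.2 ∧ b = ZFSet.pair (tag (n + 1)) X ∧ a ∈ X)

/-- The carrier `M_n(G)` of `𝕍_n(G)`. -/
def Mlvl (G : ExtDigraph) (n : ℕ) : ZFSet := (lvl G n).1

/-- The edge relation `E_n(G)` of `𝕍_n(G)`. -/
def Elvl (G : ExtDigraph) (n : ℕ) : ZFSet → ZFSet → Prop := (lvl G n).2

/-- Membership in `M_ω(G) = ⋃_{n<ω} M_n(G)`. -/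
def MemMomega (G : ExtDigraph) (x : ZFSet) : Prop := ∃ n, x ∈ Mlvl G n

/-- The edge relation `E_ω(G) = ⋃_{n<ω} E_n(G)` of `𝕍_ω(G)`. -/
def Eomega (G : ExtDigraph) (a b : ZFSet) : Prop := ∃ n, Elvl G n a b

/-- The carrier of `𝕍_m(G)` for `m ≤ ω` (with `⊤` standing for `ω`), as a class. -/
def MlvlI (G : ExtDigraph) : ℕ∞ → Set ZFSet :=
  WithTop.recTopCoe {x | MemMomega G x} fun n => {x | x ∈ Mlvl G n}

/-- The edge relation of `𝕍_m(G)` for `m ≤ ω` (with `⊤` standing for `ω`). -/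
def ElvlI (G : ExtDigraph) : ℕ∞ → ZFSet → ZFSet → Prop :=
  WithTop.recTopCoe (Eomega G) fun n => Elvl G n

/-! ### Auxiliary lemmas -/

lemma tag_mem_of_lt : ∀ {m n : ℕ}, m < n → tag m ∈ tag n := by
  intro m n h
  induction n with
  | zero => omega
  | succ k ih =>
    rcases Nat.lt_succ_iff_lt_or_eq.mp h with h' | h'
    · exact ZFSet.mem_insert_of_mem _ (ih h')
    · subst h'; exact ZFSet.mem_insert _ _

lemma tag_injective : Function.Injective tag := by
  intro m n h
  by_contra hne
  rcases Nat.lt_or_ge m n with hlt | hge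
  · have := tag_mem_of_lt hlt; rw [h] at this; exact ZFSet.mem_irrefl _ this
  · have hgt : n < m := lt_of_le_of_ne hge (Ne.symm hne)
    have := tag_mem_of_lt hgt; rw [← h] at this; exact ZFSet.mem_irrefl _ this

lemma Mlvl_succ (G : ExtDigraph) (n : ℕ) :
    Mlvl G (n + 1) = Mlvl G n ∪ ZFSet.prod {tag (n + 1)} (defic (Mlvl G n) (Elvl G n)) :=
  rfl

lemma Elvl_succ (G : ExtDigraph) (n : ℕ) (a b : ZFSet) :
    Elvl G (n + 1) a b ↔ Elvl G n a b ∨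
      ∃ X, X ∈ defic (Mlvl G n) (Elvl G n) ∧ b = ZFSet.pair (tag (n + 1)) X ∧ a ∈ X :=
  Iff.rfl

lemma Mlvl_mono (G : ExtDigraph) {m n : ℕ} (h : m ≤ n) : Mlvl G m ⊆ Mlvl G n := by
  induction n with
  | zero => simp [Nat.le_zero.mp h]
  | succ k ih =>
    rcases Nat.le_succ_iff.mp h with h' | h'
    · intro x hx
      rw [Mlvl_succ]
      exact ZFSet.mem_union.mpr (Or.inl (ih h' hx))
    · subst h'; exact fun _ hx => hx

lemma Elvl_mono (G : ExtDigraph) {m n : ℕ} (h : m ≤ n) {a b : ZFSet}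
    (hab : Elvl G m a b) : Elvl G n a b := by
  induction n with
  | zero => rwa [Nat.le_zero.mp h] at hab
  | succ k ih =>
    rcases Nat.le_succ_iff.mp h with h' | h'
    · exact Or.inl (ih h')
    · rwa [h'] at hab

lemma Elvl_dom (G : ExtDigraph) (n : ℕ) {a b : ZFSet} (hab : Elvl G n a b) :
    a ∈ Mlvl G n ∧ b ∈ Mlvl G n := by
  induction n with
  | zero =>
    obtain ⟨x, y, hxy, ha, hb⟩ := hab
    subst ha; subst hb
    constructor
    · exact ZFSet.mem_prod.mpr ⟨_, ZFSet.mem_singleton.mpr rfl, _, G.dom_left _ _ hxy, rfl⟩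
    · exact ZFSet.mem_prod.mpr ⟨_, ZFSet.mem_singleton.mpr rfl, _, G.dom_right _ _ hxy, rfl⟩
  | succ k ih =>
    rcases hab with h | ⟨X, hX, hb, haX⟩
    · obtain ⟨h1, h2⟩ := ih h
      exact ⟨Mlvl_mono G (Nat.le_succ k) h1, Mlvl_mono G (Nat.le_succ k) h2⟩
    · constructor
      · have hXsub : X ⊆ Mlvl G k := ZFSet.mem_powerset.mp (ZFSet.mem_sep.mp hX).1
        exact Mlvl_mono G (Nat.le_succ k) (hXsub haX)
      · rw [Mlvl_succ]
        exact ZFSet.mem_union.mpr (Or.inr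
          (ZFSet.mem_prod.mpr ⟨_, ZFSet.mem_singleton.mpr rfl, _, hX, hb⟩))

/-- Every element of `M_n` is a pair whose first coordinate is `tag k` for some `k ≤ n`. -/
lemma Mlvl_shape (G : ExtDigraph) (n : ℕ) {x : ZFSet} (hx : x ∈ Mlvl G n) :
    ∃ k ≤ n, ∃ w, x = ZFSet.pair (tag k) w := by
  induction n with
  | zero =>
    obtain ⟨a, ha, b, _, hab⟩ := ZFSet.mem_prod.mp hx
    exact ⟨0, le_refl 0, b, by rw [hab, ZFSet.mem_singleton.mp ha]⟩
  | succ k ih =>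
    rw [Mlvl_succ] at hx
    rcases ZFSet.mem_union.mp hx with h | h
    · obtain ⟨j, hj, w, hw⟩ := ih h
      exact ⟨j, Nat.le_succ_of_le hj, w, hw⟩
    · obtain ⟨a, ha, b, _, hab⟩ := ZFSet.mem_prod.mp h
      exact ⟨k + 1, le_refl _, b, by rw [hab, ZFSet.mem_singleton.mp ha]⟩

/-- Freshness: the new elements of level `n+1` are not in `M_n`. -/
lemma fresh (G : ExtDigraph) (n : ℕ) (X : ZFSet) :
    ZFSet.pair (tag (n + 1)) X ∉ Mlvl G n := by
  intro h
  obtain ⟨k, hk, w, hw⟩ := Mlvl_shape G n h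
  have := (ZFSet.pair_injective hw).1
  have := tag_injective this
  omega

/-- Stabilization: edges into an element of `M_n` are already in `E_n`. -/
lemma Elvl_stab (G : ExtDigraph) {m n : ℕ} (h : n ≤ m) {a b : ZFSet}
    (hb : b ∈ Mlvl G n) (hab : Elvl G m a b) : Elvl G n a b := by
  induction m with
  | zero => rwa [Nat.le_zero.mp h] 
  | succ k ih =>
    rcases Nat.le_succ_iff.mp h with h' | h'
    · rcases hab with hE | ⟨X, hX, hbeq, haX⟩
      · exact ih h' hE
      · exfalso
        exact fresh G k X (hbeq ▸ Mlvl_mono G h' hb)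
    · subst h'; exact hab

end ExtDigraph

open ExtDigraph

/-- **The true power set operator of `𝕍_ω(G)`.** For every extensional digraph `G`,
any `X ∈ M_ω(G)` and any subcollection `Y` of the `E_ω`-predecessors of `X` in
`M_ω(G)`, there is `Y' ∈ M_ω(G)` whose `E_ω`-predecessors in `M_ω(G)` are exactly
the elements of `Y`. -/
theorem Vomega_true_powerset (G : ExtDigraph) (X : ZFSet) (hX : MemMomega G X)
    (Y : Set ZFSet) (hY : Y ⊆ {x | MemMomega G x ∧ Eomega G x X}) :
    ∃ Y', MemMomega G Y' ∧ Y = {x | MemMomega G x ∧ Eomega G x Y'} := by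
  obtain ⟨n, hXn⟩ := hX
  -- every element of Y lies in `M_n`
  have hYMn : ∀ y ∈ Y, y ∈ Mlvl G n := by
    intro y hy
    obtain ⟨_, m, hm⟩ := hY hy
    rcases Nat.le_total m n with h | h
    · exact (Elvl_dom G n (Elvl_mono G h hm)).1
    · exact (Elvl_dom G n (Elvl_stab G h hXn hm)).1
  set A : ZFSet := (Mlvl G n).sep (· ∈ Y) with hA
  have hAmem : ∀ z, z ∈ A ↔ z ∈ Y := by
    intro z
    constructor
    · intro hz; exact (ZFSet.mem_sep.mp hz).2
    · intro hz; exact ZFSet.mem_sep.mpr ⟨hYMn z hz, hz⟩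
  by_cases hcase : ∃ y, y ∈ Mlvl G n ∧ ∀ z, z ∈ Mlvl G n → (z ∈ A ↔ Elvl G n z y)
  · -- A is already realized at level n
    obtain ⟨y, hyM, hy⟩ := hcase
    refine ⟨y, ⟨n, hyM⟩, ?_⟩
    ext x
    constructor
    · intro hx
      refine ⟨⟨n, hYMn x hx⟩, n, ?_⟩
      exact (hy x (hYMn x hx)).mp ((hAmem x).mpr hx)
    · rintro ⟨_, m, hm⟩
      have hEn : Elvl G n x y := by
        rcases Nat.le_total m n with h | h
        · exact Elvl_mono G h hm
        · exact Elvl_stab G h hyM hm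
      have hxM : x ∈ Mlvl G n := (Elvl_dom G n hEn).1
      exact (hAmem x).mp ((hy x hxM).mpr hEn)
  · -- A is in the deficiency; the new element at level n+1 works
    have hAdef : A ∈ defic (Mlvl G n) (Elvl G n) := by
      refine ZFSet.mem_sep.mpr ⟨ZFSet.mem_powerset.mpr ?_, hcase⟩
      intro z hz
      exact (ZFSet.mem_sep.mp hz).1
    set Y' : ZFSet := ZFSet.pair (tag (n + 1)) A with hY'
    have hY'M : Y' ∈ Mlvl G (n + 1) := by
      rw [Mlvl_succ]
      exact ZFSet.mem_union.mpr (Or.inr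
        (ZFSet.mem_prod.mpr ⟨_, ZFSet.mem_singleton.mpr rfl, _, hAdef, rfl⟩))
    refine ⟨Y', ⟨n + 1, hY'M⟩, ?_⟩
    ext x
    constructor
    · intro hx
      refine ⟨⟨n, hYMn x hx⟩, n + 1, Or.inr ⟨A, hAdef, rfl, (hAmem x).mpr hx⟩⟩
    · rintro ⟨_, m, hm⟩
      have hE : Elvl G (n + 1) x Y' := by
        rcases Nat.le_total m (n + 1) with h | h
        · exact Elvl_mono G h hm
        · exact Elvl_stab G h hY'M hm
      rcases hE with hE | ⟨X', hX', hbeq, hxX'⟩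
      · exact absurd (Elvl_dom G n hE).2 (fresh G n A)
      · have : X' = A := (ZFSet.pair_injective hbeq).2.symm
        exact (hAmem x).mp (this ▸ hxX')
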